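/- If a distribution F with density f on [0,1] satisfies the condition F((s−1)/s) ≤ (s'/(1−s'))·E[γ], where s = V'(0) > 1 is the initial slope and s' = V'(p_x) < 1 relates to the slope at the flat point of a concave increasing value function V with V(0)=0 and V(p_x)=p_x, then for any price p* < p_x, the expected utility E[max(γV(p*), V(p*) − p*)] is at most E[γ]·V(p_x) = E[γ]·p_x; hence the utility-optimal price is (arbitrarily close to) p_x. -/

import Mathlib

/-!
Write `v = V p`. For `x ∈ [0,1]` and any threshold `c ∈ [0,1]` with `v - p ≤ c v`, the buyer's
payoff `max (x v) (v - p)` is at most `x v + (v - p)` below `c` and equals `x v` above it, so the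
expected utility is at most `v E[γ] + (v - p) F(c)`. Concavity bounds `V` by its tangent at `0`,
`v ≤ V'(0) p`, which makes `c = (V'(0) - 1) / V'(0)` admissible, and by its chord to `p_x`,
`V'(p_x) (p_x - p) ≤ p_x - v`, which turns the hypothesis on `F(c)` into
`(v - p) F(c) ≤ (p_x - v) E[γ]`.
-/

open Set intervalIntegral

section Concave

variable {S : Set ℝ} {f : ℝ → ℝ} {f' x y : ℝ}

theorem ConcaveOn.sub_le_mul_sub_of_hasDerivAt (hfc : ConcaveOn ℝ S f) (hx : x ∈ S) (hy : y ∈ S)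
    (hxy : x < y) (hf' : HasDerivAt f f' x) : f y - f x ≤ f' * (y - x) := by
  have := hfc.slope_le_of_hasDerivAt hx hy hxy hf'
  rwa [slope_def_field, div_le_iff₀ (sub_pos.2 hxy)] at this

theorem ConcaveOn.mul_sub_le_sub_of_hasDerivAt (hfc : ConcaveOn ℝ S f) (hx : x ∈ S) (hy : y ∈ S)
    (hxy : x < y) (hf' : HasDerivAt f f' y) : f' * (y - x) ≤ f y - f x := by
  have := hfc.le_slope_of_hasDerivAt hx hy hxy hf'
  rwa [slope_def_field, le_div_iff₀ (sub_pos.2 hxy)] at this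

end Concave

section Density

variable {f : ℝ → ℝ}

theorem integral_max_mul_eq_of_nonpos {a b : ℝ} (hb : b ≤ 0) (hba : b ≤ a) :
    ∫ x in (0:ℝ)..1, max (x * a) b * f x = a * ∫ x in (0:ℝ)..1, x * f x := by
  rw [← integral_const_mul]
  refine integral_congr fun x hx ↦ ?_
  rw [uIcc_of_le zero_le_one] at hx
  have hbx : b ≤ x * a := by
    rcases le_total 0 a with ha | ha
    · exact hb.trans (mul_nonneg hx.1 ha)
    · nlinarith [hx.2]
  simp only [max_eq_left hbx]
  ring

theorem intervalIntegrable_mul_of_continuousOn_Icc {g : ℝ → ℝ} (hg : Continuous g)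
    (hf : ContinuousOn f (Icc 0 1)) {u w : ℝ} (hu : 0 ≤ u) (huw : u ≤ w) (hw : w ≤ 1) :
    IntervalIntegrable (fun x ↦ g x * f x) MeasureTheory.volume u w :=
  (hg.continuousOn.mul (hf.mono (Icc_subset_Icc hu hw))).intervalIntegrable_of_Icc huw

theorem integral_max_mul_le (hf0 : ∀ x ∈ Icc (0:ℝ) 1, 0 ≤ f x) (hf : ContinuousOn f (Icc 0 1))
    {a b c : ℝ} (ha : 0 ≤ a) (hb : 0 ≤ b) (hc0 : 0 ≤ c) (hc1 : c ≤ 1) (hbc : b ≤ c * a) :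
    ∫ x in (0:ℝ)..1, max (x * a) b * f x
      ≤ a * (∫ x in (0:ℝ)..1, x * f x) + b * ∫ x in (0:ℝ)..c, f x := by
  have hint {g : ℝ → ℝ} (hg : Continuous g) {u w : ℝ} (hu : 0 ≤ u) (huw : u ≤ w) (hw : w ≤ 1) :=
    intervalIntegrable_mul_of_continuousOn_Icc hg hf hu huw hw
  have hmax : Continuous fun x : ℝ ↦ max (x * a) b := by fun_prop
  have hlin : Continuous fun x : ℝ ↦ x * a := by fun_prop
  have hlow : ∫ x in (0:ℝ)..c, max (x * a) b * f x
      ≤ ∫ x in (0:ℝ)..c, x * a * f x + b * f x := by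
    refine integral_mono_on hc0 (hint hmax le_rfl hc0 hc1)
      ((hint hlin le_rfl hc0 hc1).add (hint continuous_const le_rfl hc0 hc1)) fun x hx ↦ ?_
    have hxa := mul_nonneg hx.1 ha
    rw [← add_mul]
    exact mul_le_mul_of_nonneg_right (max_le (by linarith) (by linarith))
      (hf0 x ⟨hx.1, hx.2.trans hc1⟩)
  have hhigh : ∫ x in c..1, max (x * a) b * f x = ∫ x in c..1, x * a * f x := by
    refine integral_congr fun x hx ↦ ?_
    rw [uIcc_of_le hc1] at hx
    simp only [max_eq_left (hbc.trans (mul_le_mul_of_nonneg_right hx.1 ha))]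
  calc ∫ x in (0:ℝ)..1, max (x * a) b * f x
      = (∫ x in (0:ℝ)..c, max (x * a) b * f x) + ∫ x in c..1, max (x * a) b * f x :=
        (integral_add_adjacent_intervals (hint hmax le_rfl hc0 hc1)
          (hint hmax hc0 hc1 le_rfl)).symm
    _ ≤ (∫ x in (0:ℝ)..c, x * a * f x + b * f x) + ∫ x in c..1, x * a * f x := by
        rw [hhigh]; exact add_le_add_left hlow _
    _ = ((∫ x in (0:ℝ)..c, x * a * f x) + ∫ x in c..1, x * a * f x)
          + b * ∫ x in (0:ℝ)..c, f x := by
        rw [integral_add (hint hlin le_rfl hc0 hc1) (hint continuous_const le_rfl hc0 hc1),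
          integral_const_mul]
        ring
    _ = a * (∫ x in (0:ℝ)..1, x * f x) + b * ∫ x in (0:ℝ)..c, f x := by
        rw [integral_add_adjacent_intervals (hint hlin le_rfl hc0 hc1) (hint hlin hc0 hc1 le_rfl)]
        simp only [fun x ↦ mul_right_comm x a (f x), integral_mul_const]
        ring

end Density

theorem no_sale_price_utility_optimal_general
    (F fγ V V' : ℝ → ℝ) (px : ℝ)
    (hfnonneg : ∀ x ∈ Set.Icc (0:ℝ) 1, 0 ≤ fγ x)
    (hfcont : ContinuousOn fγ (Set.Icc 0 1))
    (hF : ∀ t : ℝ, F t = ∫ x in (0:ℝ)..t, fγ x)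
    (hV0 : V 0 = 0) (hVpx : V px = px)
    (hVconc : ConcaveOn ℝ (Set.Icc 0 px) V)
    (hV' : ∀ p ∈ Set.Icc (0:ℝ) px, HasDerivAt V (V' p) p)
    (hcond : F ((V' 0 - 1) / V' 0)
      ≤ (V' px / (1 - V' px)) * ∫ x in (0:ℝ)..1, x * fγ x) :
    ∀ p : ℝ, 0 < p → p < px →
      (∫ x in (0:ℝ)..1, max (x * V p) (V p - p) * fγ x)
        ≤ (∫ x in (0:ℝ)..1, x * fγ x) * px := by
  intro p hp hppx
  set E := ∫ x in (0:ℝ)..1, x * fγ x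
  have hE : 0 ≤ E := integral_nonneg zero_le_one fun x hx ↦ mul_nonneg hx.1 (hfnonneg x hx)
  have h0 : (0:ℝ) ∈ Icc 0 px := ⟨le_rfl, (hp.trans hppx).le⟩
  have hp' : p ∈ Icc 0 px := ⟨hp.le, hppx.le⟩
  have hpx : px ∈ Icc 0 px := ⟨h0.2, le_rfl⟩
  have htangent : V p ≤ V' 0 * p := by
    simpa only [hV0, sub_zero] using hVconc.sub_le_mul_sub_of_hasDerivAt h0 hp' hp (hV' 0 h0)
  have hchord : V' px * (px - p) ≤ px - V p := by
    simpa only [hVpx] using hVconc.mul_sub_le_sub_of_hasDerivAt hp' hpx hppx (hV' px hpx)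
  rcases le_or_gt (V p) p with hle | hlt
  · rw [integral_max_mul_eq_of_nonpos (by linarith) (by linarith)]
    nlinarith
  have hs : 1 < V' 0 := by nlinarith
  have hs' : V' px < 1 := by nlinarith
  have hloss : (V p - p) * (V' px / (1 - V' px)) ≤ px - V p := by
    rw [← mul_div_assoc, div_le_iff₀ (sub_pos.2 hs')]
    nlinarith
  calc ∫ x in (0:ℝ)..1, max (x * V p) (V p - p) * fγ x
      ≤ V p * E + (V p - p) * F ((V' 0 - 1) / V' 0) := by
        rw [hF]
        refine integral_max_mul_le (a := V p) (b := V p - p) (c := (V' 0 - 1) / V' 0)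
          hfnonneg hfcont (by linarith) (by linarith)
          (div_nonneg (by linarith) (by linarith)) (div_le_one_of_le₀ (by linarith) (by linarith))
          ?_
        rw [div_mul_eq_mul_div, le_div_iff₀ (by linarith)]
        nlinarith
    _ ≤ V p * E + (V p - p) * (V' px / (1 - V' px) * E) := by gcongr
    _ ≤ E * px := by nlinarith [mul_le_mul_of_nonneg_right hloss hE]

/-- Theorem 4.1 (utility optimality of no-sale pricing): if
`F((s−1)/s) ≤ (s'/(1−s'))·E[γ]` where `s = V'(0) > 1` and `s' = V'(p_x) < 1`,
then every price `p* < p_x` earns expected utility at most `E[γ]·p_x`, the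
expected utility at the no-sale price `p_x`; hence the utility-optimal price is
(arbitrarily close to) `p_x`. -/
theorem no_sale_price_utility_optimal
    (F fγ V V' : ℝ → ℝ) (px : ℝ) (hpx : 0 < px)
    (hfnonneg : ∀ x ∈ Set.Icc (0:ℝ) 1, 0 ≤ fγ x)
    (hfcont : ContinuousOn fγ (Set.Icc 0 1))
    (hftot : (∫ x in (0:ℝ)..1, fγ x) = 1)
    (hF : ∀ t : ℝ, F t = ∫ x in (0:ℝ)..t, fγ x)
    (hV0 : V 0 = 0) (hVpx : V px = px)
    (hVflat : ∀ p : ℝ, px ≤ p → V p = px)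
    (hVmono : MonotoneOn V (Set.Icc 0 px))
    (hVconc : ConcaveOn ℝ (Set.Icc 0 px) V)
    (hV' : ∀ p ∈ Set.Icc (0:ℝ) px, HasDerivAt V (V' p) p)
    (hs : 1 < V' 0) (hs' : V' px < 1)
    (hcond : F ((V' 0 - 1) / V' 0)
      ≤ (V' px / (1 - V' px)) * ∫ x in (0:ℝ)..1, x * fγ x) :
    ∀ p : ℝ, 0 < p → p < px →
      (∫ x in (0:ℝ)..1, max (x * V p) (V p - p) * fγ x)
        ≤ (∫ x in (0:ℝ)..1, x * fγ x) * px :=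
  no_sale_price_utility_optimal_general F fγ V V' px hfnonneg hfcont hF hV0 hVpx hVconc hV' hcond
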